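/- arXiv:1606.09113 — 7 statements merged into one kernel-verified Lean document; each statement's English description precedes it below -/
import Mathlib

section
/- For every integer d ≥ 2 and every p ∈ ℝ^d with all entries positive, min_{w ∈ W_d} G(p,w) ≤ (√3/2) · d / (d^{d/2} · d!). -/
/-!
Write `Q(w) = ∑ wᵢ² pᵢ²`. The vectors `w^(1) = (1,1,2,…,d-1)` and `w^(2) = (0,2,2,…,d-1)` agree
from the third coordinate on, and their first two coordinates contribute `p₁² + p₂²` and `4p₂²`;
according as `p₁ ≥ √3 p₂` or not, one of these is at least `(4/√3) p₁p₂`. AM-GM applied to the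
`d` numbers `(2/√3) p₁p₂, (2/√3) p₁p₂, (i-1)² pᵢ² (3 ≤ i ≤ d)` then gives
`Q(w)^d ≥ d^d · (4/3) · ((d-1)!)² · (∏ pᵢ)²`, which is the bound on `G(p,w)`.
-/

/-- The vector `w^(j)` (0-based index `j`, representing `j+1 ∈ {1,…,d}`):
`w^(j)_i = 0` for `i < j`, `w^(j)_j = j` (1-based value, i.e. `j+1` here),
and `w^(j)_i = i − 1` (1-based, i.e. `i` here) for `i > j`. -/
def wvec (d : ℕ) (j : Fin d) : Fin d → ℕ :=
  fun i => if i < j then 0 else if i = j then (j : ℕ) + 1 else (i : ℕ)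

/-- `G(p,w) = (∏ i, p_i) / (∑ i, w_i² p_i²)^{d/2}`. -/
noncomputable def G (d : ℕ) (p : Fin d → ℝ) (w : Fin d → ℕ) : ℝ :=
  (∏ i, p i) / (Real.sqrt (∑ i, ((w i : ℝ)) ^ 2 * p i ^ 2)) ^ d

/-- `min_{w ∈ W_d} G(p,w)` where `W_d = {w^(1), …, w^(d)}`. -/
noncomputable def minG (d : ℕ) (p : Fin d → ℝ) : ℝ :=
  ⨅ j : Fin d, G d p (wvec d j)

open Finset Real
open scoped Nat

theorem card_pow_mul_prod_le_sum_pow {ι : Type*} (s : Finset ι) (z : ι → ℝ)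
    (hz : ∀ i ∈ s, 0 ≤ z i) : (#s : ℝ) ^ #s * ∏ i ∈ s, z i ≤ (∑ i ∈ s, z i) ^ #s := by
  rcases s.eq_empty_or_nonempty with rfl | hs
  · simp
  have hn : (0 : ℝ) < #s := by exact_mod_cast hs.card_pos
  have h := geom_mean_le_arith_mean s (fun _ => 1) z (fun _ _ => zero_le_one) (by simpa using hn) hz
  simp only [rpow_one, sum_const, nsmul_eq_mul, mul_one, one_mul] at h
  have h' := pow_le_pow_left₀ (rpow_nonneg (prod_nonneg hz) _) h #s
  rw [← rpow_natCast, ← rpow_mul (prod_nonneg hz), inv_mul_cancel₀ hn.ne', rpow_one, div_pow,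
    le_div_iff₀ (by positivity)] at h'
  linarith

theorem prod_fin_add_two_eq_factorial (n : ℕ) : ∏ i : Fin n, ((i : ℝ) + 2) = (n + 1)! := by
  induction n with
  | zero => simp
  | succ k ih =>
    rw [Fin.prod_univ_castSucc]
    simp only [Fin.val_castSucc, Fin.val_last, ih, Nat.factorial_succ]
    push_cast
    ring

theorem four_div_sqrt_three_mul_le {a b : ℝ} (ha : 0 ≤ a) (hb : 0 ≤ b) :
    4 / √3 * (a * b) ≤ a ^ 2 + b ^ 2 ∨ 4 / √3 * (a * b) ≤ (2 * b) ^ 2 := by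
  have h3 : 0 < √3 := by positivity
  have hsq : √3 ^ 2 = 3 := sq_sqrt (by norm_num)
  rw [div_mul_eq_mul_div, div_le_iff₀ h3, div_le_iff₀ h3]
  rcases le_total a (√3 * b) with hab | hab
  · right
    nlinarith [mul_le_mul_of_nonneg_left hab hb]
  · left
    -- `√3 (a² + b²) - 4ab = (a - √3 b)(√3 a - b)`, and both factors are nonnegative
    have h₁ : 0 ≤ a - √3 * b := by linarith
    have h₂ : 0 ≤ √3 * a - b := by nlinarith [mul_le_mul_of_nonneg_left hab h3.le]
    nlinarith [mul_nonneg h₁ h₂]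

theorem wvec_succ_succ {n : ℕ} {j : Fin (n + 2)} (hj : (j : ℕ) ≤ 1) (i : Fin n) :
    wvec (n + 2) j i.succ.succ = (i : ℕ) + 2 := by
  have h₁ : ¬ i.succ.succ < j := by rw [Fin.lt_def, Fin.val_succ, Fin.val_succ]; omega
  have h₂ : i.succ.succ ≠ j := by rw [Ne, Fin.ext_iff, Fin.val_succ, Fin.val_succ]; omega
  simp [wvec, h₁, h₂]

theorem sum_sq_wvec_eq {n : ℕ} (p : Fin (n + 2) → ℝ) {j : Fin (n + 2)} (hj : (j : ℕ) ≤ 1) :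
    ∑ i, (wvec (n + 2) j i : ℝ) ^ 2 * p i ^ 2 =
      (wvec (n + 2) j 0 : ℝ) ^ 2 * p 0 ^ 2 + (wvec (n + 2) j 1 : ℝ) ^ 2 * p 1 ^ 2
        + ∑ i : Fin n, (((i : ℝ) + 2) * p i.succ.succ) ^ 2 := by
  simp only [Fin.sum_univ_succ (n := n + 1), Fin.sum_univ_succ (n := n), wvec_succ_succ hj]
  push_cast
  simp only [Fin.succ_zero_eq_one, mul_pow]
  ring

theorem exists_wvec_le_sum_sq {n : ℕ} (p : Fin (n + 2) → ℝ) (hp : ∀ i, 0 ≤ p i) :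
    ∃ j, 4 / √3 * (p 0 * p 1) + ∑ i : Fin n, (((i : ℝ) + 2) * p i.succ.succ) ^ 2 ≤
      ∑ i, (wvec (n + 2) j i : ℝ) ^ 2 * p i ^ 2 := by
  rcases four_div_sqrt_three_mul_le (hp 0) (hp 1) with h | h
  · refine ⟨0, ?_⟩
    rw [sum_sq_wvec_eq p (by simp)]
    simpa [wvec] using h
  · refine ⟨1, ?_⟩
    rw [sum_sq_wvec_eq p (by simp)]
    simpa [wvec, mul_pow] using h

theorem pow_mul_sq_prod_le_pow {n : ℕ} (p : Fin (n + 2) → ℝ) (hp : ∀ i, 0 ≤ p i) {κ Q : ℝ}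
    (hκ : 0 ≤ κ) (hQ : κ * (p 0 * p 1) + ∑ i : Fin n, (((i : ℝ) + 2) * p i.succ.succ) ^ 2 ≤ Q) :
    ((n : ℝ) + 2) ^ (n + 2) * (κ / 2 * (n + 1)! * ∏ i, p i) ^ 2 ≤ Q ^ (n + 2) := by
  have hc : 0 ≤ κ / 2 * (p 0 * p 1) := mul_nonneg (by positivity) (mul_nonneg (hp 0) (hp 1))
  let z : Fin (n + 2) → ℝ :=
    Fin.cons (κ / 2 * (p 0 * p 1)) (Fin.cons (κ / 2 * (p 0 * p 1))
      fun i => (((i : ℝ) + 2) * p i.succ.succ) ^ 2)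
  have hz : ∀ i ∈ univ, 0 ≤ z i := fun i _ =>
    Fin.cases hc (Fin.cases hc fun i => sq_nonneg _) i
  have hsum : ∑ i, z i ≤ Q := by
    simp only [z, Fin.sum_cons]
    linarith
  have hprod : ∏ i, z i = (κ / 2 * (n + 1)! * ∏ i, p i) ^ 2 := by
    have hsplit : ∏ i, p i = p 0 * p 1 * ∏ i : Fin n, p i.succ.succ := by
      rw [Fin.prod_univ_succ, Fin.prod_univ_succ, mul_assoc]
      rfl
    simp only [z, Fin.prod_cons, hsplit, mul_pow, prod_mul_distrib, prod_pow,
      prod_fin_add_two_eq_factorial]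
    ring
  have hamgm := card_pow_mul_prod_le_sum_pow univ z hz
  rw [card_univ, Fintype.card_fin, hprod] at hamgm
  push_cast at hamgm
  exact hamgm.trans (pow_le_pow_left₀ (sum_nonneg hz) hsum _)

theorem G_le_inv_of_sq_mul_sq_prod_le {d : ℕ} {p : Fin d → ℝ} (hp : ∀ i, 0 ≤ p i)
    {w : Fin d → ℕ} {c : ℝ} (hc : 0 < c)
    (h : c ^ 2 * (∏ i, p i) ^ 2 ≤ (∑ i, (w i : ℝ) ^ 2 * p i ^ 2) ^ d) :
    G d p w ≤ c⁻¹ := by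
  have hQ : 0 ≤ ∑ i, (w i : ℝ) ^ 2 * p i ^ 2 := by positivity
  have hcP : c * ∏ i, p i ≤ √(∑ i, (w i : ℝ) ^ 2 * p i ^ 2) ^ d := by
    rw [← pow_le_pow_iff_left₀ (mul_nonneg hc.le (prod_nonneg fun i _ => hp i)) (by positivity)
      two_ne_zero, mul_pow, ← pow_mul, mul_comm d, pow_mul, sq_sqrt hQ]
    exact h
  exact div_le_of_le_mul₀ (by positivity) (by positivity) (by rwa [le_inv_mul_iff₀ hc])

/-- For every `d ≥ 2` and positive `p ∈ ℝ^d`,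
`min_{w ∈ W_d} G(p,w) ≤ (√3/2)·d/(d^{d/2}·d!)`. -/
theorem stmt0 (d : ℕ) (hd : 2 ≤ d) (p : Fin d → ℝ) (hp : ∀ i, 0 < p i) :
    minG d p ≤ Real.sqrt 3 / 2 * d / (Real.sqrt d ^ d * Nat.factorial d) := by
  obtain ⟨n, rfl⟩ : ∃ n, d = n + 2 := ⟨d - 2, by omega⟩
  have hp' : ∀ i, 0 ≤ p i := fun i => (hp i).le
  obtain ⟨j, hj⟩ := exists_wvec_le_sum_sq p hp'
  set c := √((n + 2 : ℕ) : ℝ) ^ (n + 2) * (2 / √3 * (n + 1)!) with hc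
  have hc₀ : 0 < c := by positivity
  calc minG (n + 2) p ≤ G (n + 2) p (wvec (n + 2) j) := ciInf_le (Set.finite_range _).bddBelow j
    _ ≤ c⁻¹ := by
      refine G_le_inv_of_sq_mul_sq_prod_le hp' hc₀ ?_
      convert pow_mul_sq_prod_le_pow p hp' (by positivity) hj using 1
      rw [hc, mul_pow, ← pow_mul, mul_comm (n + 2), pow_mul, sq_sqrt (by positivity)]
      push_cast
      ring
    _ = √3 / 2 * (n + 2 : ℕ) / (√(n + 2 : ℕ) ^ (n + 2) * (n + 2)!) := by
      rw [hc, Nat.factorial_succ (n + 1)]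
      have : √((n + 2 : ℕ) : ℝ) ^ (n + 2) ≠ 0 := by positivity
      push_cast
      field_simp
      ring
end

section
/- For the vector p* ∈ ℝ^d defined by p*_1 = 1, p*_2 = 1/√3, p*_j = √(2/3)/(j−1) for 3 ≤ j ≤ d, one has min_{w ∈ W_d} G(p*,w) = (√3/2) · d / (d^{d/2} · d!), and this minimum is attained at w^(1), i.e. it equals (∏_{i=1}^d p*_i)/D_1(p*)^d. -/
noncomputable def D (d : ℕ) (j : Fin d) (p : Fin d → ℝ) : ℝ :=
  Real.sqrt (∑ i, ((wvec d j i : ℝ)) ^ 2 * p i ^ 2)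

/-- `p*`: `p*_1 = 1`, `p*_2 = 1/√3`, `p*_j = √(2/3)/(j−1)` for `3 ≤ j ≤ d`
(0-based: index `i` has 1-based position `i+1`, so the denominator `j−1` is `i`). -/
noncomputable def pstar (d : ℕ) : Fin d → ℝ :=
  fun i => if (i : ℕ) = 0 then 1 else if (i : ℕ) = 1 then 1 / Real.sqrt 3
    else Real.sqrt (2 / 3) / ((i : ℕ) : ℝ)

/-!
Each `G(p*, w^(j))` has the same numerator `∏ p*`, so the minimum sits where `D_j(p*)` is
largest. In `D_j(p*)²` every index `i > max(j, 2)` contributes `(i-1)² p*ᵢ² = 2/3`, while the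
indices up to `max(j, 2)` contribute exactly `4/3` if `j ≤ 2` and
`j² p*_j² = (2/3) (j/(j-1))² ≤ 2j/3` if `j ≥ 3`. Hence `D_j(p*)² ≤ 2d/3`, with equality for
`j = 1`, and the value follows from `(d-1)! ∏ p* = (√3/2) (2/3)^{d/2}`.
-/

open Finset Nat

section InfOverWeights

variable {d : ℕ} {p : Fin d → ℝ}

lemma G_wvec_eq (j : Fin d) : G d p (wvec d j) = (∏ i, p i) / D d j p ^ d := rfl

lemma D_pos (hp : ∀ i, 0 < p i) (j : Fin d) : 0 < D d j p := by
  refine Real.sqrt_pos.2 (sum_pos' (fun i _ => by positivity) ⟨j, mem_univ j, ?_⟩)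
  have hw : wvec d j j = (j : ℕ) + 1 := by simp [wvec]
  have := hp j
  rw [hw]
  positivity

lemma minG_eq_G_of_forall_D_le (j₀ : Fin d) (hp : ∀ i, 0 < p i)
    (hD : ∀ j, D d j p ≤ D d j₀ p) : minG d p = G d p (wvec d j₀) := by
  have : Nonempty (Fin d) := ⟨j₀⟩
  refine le_antisymm (ciInf_le (Finite.bddBelow_range _) j₀) (le_ciInf fun j => ?_)
  rw [G_wvec_eq, G_wvec_eq]
  have hDj := D_pos hp j
  exact div_le_div_of_nonneg_left (prod_pos fun i _ => hp i).le (pow_pos hDj d)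
    (pow_le_pow_left₀ hDj.le (hD j) d)

end InfOverWeights

noncomputable def pstarSeq (i : ℕ) : ℝ :=
  if i = 0 then 1 else if i = 1 then 1 / Real.sqrt 3 else Real.sqrt (2 / 3) / (i : ℝ)

lemma pstarSeq_pos (i : ℕ) : 0 < pstarSeq i := by
  unfold pstarSeq
  split_ifs with h0 h1
  · exact one_pos
  · positivity
  · have : (0 : ℝ) < i := by exact_mod_cast Nat.pos_of_ne_zero h0
    positivity

lemma sq_mul_pstarSeq_sq {i : ℕ} (hi : 2 ≤ i) : (i : ℝ) ^ 2 * pstarSeq i ^ 2 = 2 / 3 := by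
  have : (i : ℝ) ≠ 0 := by positivity
  rw [pstarSeq, if_neg (by omega), if_neg (by omega), div_pow, Real.sq_sqrt (by norm_num)]
  field_simp

/-- `D_{j+1}(p*)²`, written over `range d` with `0`-based `i` and `j`. -/
noncomputable def starNormSq (j d : ℕ) : ℝ :=
  ∑ i ∈ range d, (if i < j then 0 else if i = j then (j : ℝ) + 1 else i) ^ 2 * pstarSeq i ^ 2

lemma D_pstar (d : ℕ) (j : Fin d) : D d j (pstar d) = Real.sqrt (starNormSq j d) := by
  rw [D, starNormSq, ← Fin.sum_univ_eq_sum_range]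
  congr 1
  refine sum_congr rfl fun i _ => ?_
  simp only [wvec, Fin.lt_def, Fin.ext_iff, pstar, pstarSeq]
  split_ifs <;> push_cast <;> rfl

lemma starNormSq_succ {j d : ℕ} (hj : j < d) (hd : 2 ≤ d) :
    starNormSq j (d + 1) = starNormSq j d + 2 / 3 := by
  rw [starNormSq, sum_range_succ, if_neg (by omega), if_neg (by omega), sq_mul_pstarSeq_sq hd]
  rfl

/-- Each index `i ≥ 2` past `j` contributes `i² p*ᵢ² = 2/3`. -/
lemma starNormSq_sub_eq {j n d : ℕ} (hjn : j < n) (hn : 2 ≤ n) (hnd : n ≤ d) :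
    starNormSq j d - 2 / 3 * d = starNormSq j n - 2 / 3 * n := by
  induction d, hnd using Nat.le_induction with
  | base => rfl
  | succ d hnd ih =>
    rw [starNormSq_succ (by omega) (by omega), ← ih]
    push_cast
    ring

lemma starNormSq_self_succ (j : ℕ) :
    starNormSq j (j + 1) = ((j : ℝ) + 1) ^ 2 * pstarSeq j ^ 2 := by
  rw [starNormSq, sum_range_succ, if_neg (lt_irrefl j), if_pos rfl, add_eq_right]
  exact sum_eq_zero fun i hi => by rw [if_pos (mem_range.1 hi)]; ring

lemma starNormSq_zero {d : ℕ} (hd : 2 ≤ d) : starNormSq 0 d = 2 / 3 * d := by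
  have h := starNormSq_sub_eq (j := 0) (by norm_num) le_rfl hd
  have h2 : starNormSq 0 2 = 4 / 3 := by
    norm_num [starNormSq, sum_range_succ, pstarSeq, div_pow]
  rw [h2] at h
  push_cast at h
  linarith

lemma succ_sq_mul_pstarSeq_sq_le {j : ℕ} (hj : 1 ≤ j) :
    ((j : ℝ) + 1) ^ 2 * pstarSeq j ^ 2 ≤ 2 / 3 * (j + 1) := by
  obtain rfl | hj2 := eq_or_lt_of_le hj
  · norm_num [pstarSeq, div_pow]
  · have hjr : (2 : ℝ) ≤ j := by exact_mod_cast hj2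
    have key := sq_mul_pstarSeq_sq hj2
    have hpos : 0 < pstarSeq j ^ 2 := by have := pstarSeq_pos j; positivity
    nlinarith

lemma starNormSq_le {j d : ℕ} (hjd : j < d) (hd : 2 ≤ d) : starNormSq j d ≤ 2 / 3 * d := by
  obtain rfl | hj := Nat.eq_zero_or_pos j
  · exact (starNormSq_zero hd).le
  · have h := starNormSq_sub_eq (le_refl (j + 1)) (by omega) hjd
    rw [starNormSq_self_succ] at h
    have := succ_sq_mul_pstarSeq_sq_le hj
    push_cast at h
    linarith

lemma prod_pstarSeq_mul_factorial (n : ℕ) :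
    (∏ i ∈ range (n + 2), pstarSeq i) * (n + 1)! =
      Real.sqrt 3 / 2 * Real.sqrt (2 / 3) ^ (n + 2) := by
  induction n with
  | zero =>
    have h3 : Real.sqrt (2 / 3) ^ 2 = 2 / 3 := Real.sq_sqrt (by norm_num)
    norm_num [prod_range_succ, pstarSeq, h3]
    field_simp
    rw [Real.sq_sqrt zero_le_two]
  | succ n ih =>
    rw [prod_range_succ, pow_succ, ← mul_assoc, ← ih, Nat.factorial_succ (n + 1), pstarSeq,
      if_neg (by omega), if_neg (by omega)]
    push_cast
    field_simp
    ring

lemma G_pstar_wvec_zero {d : ℕ} (hd : 2 ≤ d) :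
    G d (pstar d) (wvec d ⟨0, zero_lt_two.trans_le hd⟩) =
      Real.sqrt 3 / 2 * d / (Real.sqrt d ^ d * d !) := by
  obtain ⟨n, rfl⟩ : ∃ n, d = n + 2 := ⟨d - 2, by omega⟩
  have hprod : ∏ i, pstar (n + 2) i = ∏ i ∈ range (n + 2), pstarSeq i :=
    Fin.prod_univ_eq_prod_range pstarSeq (n + 2)
  have hf : ((n + 1)! : ℝ) ≠ 0 := by positivity
  have hP := eq_div_of_mul_eq hf (prod_pstarSeq_mul_factorial n)
  rw [G_wvec_eq, D_pstar, starNormSq_zero hd, hprod, hP,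
    Real.sqrt_mul (by norm_num), mul_pow, Nat.factorial_succ (n + 1)]
  push_cast
  field_simp
  ring

/-- `min_{w ∈ W_d} G(p*,w) = (√3/2)·d/(d^{d/2}·d!)`, attained at `w^(1)`. -/
theorem stmt1 (d : ℕ) (hd : 2 ≤ d) :
    minG d (pstar d) = Real.sqrt 3 / 2 * d / (Real.sqrt d ^ d * Nat.factorial d) ∧
      minG d (pstar d) = G d (pstar d) (wvec d ⟨0, by omega⟩) := by
  have hmin : minG d (pstar d) = G d (pstar d) (wvec d ⟨0, by omega⟩) := by
    refine minG_eq_G_of_forall_D_le _ (fun i => pstarSeq_pos i) fun j => ?_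
    rw [D_pstar, D_pstar, starNormSq_zero hd]
    exact Real.sqrt_le_sqrt (starNormSq_le j.isLt hd)
  exact ⟨hmin.trans (G_pstar_wvec_zero hd), hmin⟩
end

section
/- If p ∈ ℝ^d has all entries positive and min_{w ∈ W_d} G(p,w) = (√3/2) · d / (d^{d/2} · d!) (i.e. p attains the supremum of min_{w ∈ W_d} G(·,w) over the positive orthant), then there exists κ > 0 such that p = κ·p*, where p*_1 = 1, p*_2 = 1/√3, and p*_j = √(2/3)/(j−1) for 3 ≤ j ≤ d. In other words, the set of maximizers is exactly the ray {κ·p* : κ > 0}. -/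
/-!
`G(p, w)` is invariant under scaling `p`. Averaging the constraints for `w^(1)` and `w^(2)` with
weights `2/3` and `1/3` gives the diagonal form `∑ c_i p_i²` with `c = (2/3, 2, 2², …, (d-1)²)`.
If `min_w G(p, w)` reaches the value `Gsup d`, this gives `(∑ c_i p_i² / d)^d ≤ ∏ c_i p_i²`, so
AM-GM holds with equality and `c_i p_i²` is constant; since `c_i p*_i² = 2/3`, that means
`p ∝ p*`. Conversely, at `p*` the norms for `w^(1)` and `w^(2)` both equal `2d/3` and dominate
all others, and `∏ p*_i` is read off from `c_i p*_i² = 2/3`.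
-/
open Finset

section AMGM

variable {ι : Type*} [Fintype ι] {a : ι → ℝ}

private lemma sum_div_card :
    (∑ i, a i) / Fintype.card ι = ∑ i, (Fintype.card ι : ℝ)⁻¹ * a i := by
  rw [← mul_sum, div_eq_inv_mul]

variable [Nonempty ι]

private lemma sum_card_inv : ∑ _i : ι, (Fintype.card ι : ℝ)⁻¹ = 1 := by
  simp [Finset.card_univ]

private lemma geom_mean_pow_card (ha : ∀ i, 0 ≤ a i) :
    (∏ i, a i ^ (Fintype.card ι : ℝ)⁻¹) ^ Fintype.card ι = ∏ i, a i := by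
  rw [← prod_pow]
  exact prod_congr rfl fun i _ => Real.rpow_inv_natCast_pow (ha i) Fintype.card_ne_zero

theorem Real.prod_le_sum_div_card_pow (ha : ∀ i, 0 ≤ a i) :
    ∏ i, a i ≤ ((∑ i, a i) / Fintype.card ι) ^ Fintype.card ι := by
  rw [← geom_mean_pow_card ha, sum_div_card]
  exact pow_le_pow_left₀ (prod_nonneg fun i _ => Real.rpow_nonneg (ha i) _)
    (Real.geom_mean_le_arith_mean_weighted _ _ _ (fun _ _ => by positivity) sum_card_inv
      fun i _ => ha i) _

theorem Real.eq_of_prod_eq_sum_div_card_pow (ha : ∀ i, 0 ≤ a i)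
    (h : ∏ i, a i = ((∑ i, a i) / Fintype.card ι) ^ Fintype.card ι) (i j : ι) : a i = a j := by
  rw [← geom_mean_pow_card ha, sum_div_card] at h
  have hmean := (pow_left_inj₀ (prod_nonneg fun i _ => Real.rpow_nonneg (ha i) _)
    (sum_nonneg fun i _ => mul_nonneg (by positivity) (ha i)) Fintype.card_ne_zero).1 h
  exact (Real.geom_mean_eq_arith_mean_weighted_iff_of_pos _ _ _ (fun _ _ => by positivity)
    sum_card_inv fun i _ => ha i).1 hmean i (mem_univ i) j (mem_univ j)

end AMGM

theorem Finset.sum_le_sum_of_pair_le {ι M : Type*} [Fintype ι] [DecidableEq ι]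
    [AddCommMonoid M] [PartialOrder M] [IsOrderedAddMonoid M] {f g : ι → M} {a b : ι} (hab : a ≠ b)
    (hpair : f a + f b ≤ g a + g b) (hrest : ∀ i, i ≠ a → i ≠ b → f i ≤ g i) :
    ∑ i, f i ≤ ∑ i, g i := by
  rw [← sum_compl_add_sum {a, b}, ← sum_compl_add_sum {a, b}, sum_pair hab, sum_pair hab]
  refine add_le_add (sum_le_sum fun i hi => ?_) hpair
  simp only [mem_compl, mem_insert, mem_singleton, not_or] at hi
  exact hrest i hi.1 hi.2

noncomputable def weightedSqNorm {d : ℕ} (p : Fin d → ℝ) (w : Fin d → ℕ) : ℝ :=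
  ∑ i, (w i : ℝ) ^ 2 * p i ^ 2

noncomputable def Gsup (d : ℕ) : ℝ :=
  Real.sqrt 3 / 2 * d / (Real.sqrt d ^ d * Nat.factorial d)

noncomputable def avgWeight (n : ℕ) : ℝ :=
  if n = 0 then 2 / 3 else if n = 1 then 2 else (n : ℝ) ^ 2

section

variable {d : ℕ}

lemma weightedSqNorm_nonneg (p : Fin d → ℝ) (w : Fin d → ℕ) : 0 ≤ weightedSqNorm p w :=
  sum_nonneg fun _ _ => by positivity

lemma G_eq (p : Fin d → ℝ) (w : Fin d → ℕ) :
    G d p w = (∏ i, p i) / Real.sqrt (weightedSqNorm p w) ^ d := rfl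

lemma G_sq (p : Fin d → ℝ) (w : Fin d → ℕ) :
    G d p w ^ 2 = (∏ i, p i) ^ 2 / weightedSqNorm p w ^ d := by
  rw [G_eq, div_pow, ← pow_mul, mul_comm, pow_mul, Real.sq_sqrt (weightedSqNorm_nonneg p w)]

lemma G_le_G_of_weightedSqNorm_le {p : Fin d → ℝ} {w w' : Fin d → ℕ} (hP : 0 ≤ ∏ i, p i)
    (hw' : 0 < weightedSqNorm p w') (h : weightedSqNorm p w' ≤ weightedSqNorm p w) :
    G d p w ≤ G d p w' :=
  div_le_div_of_nonneg_left hP (pow_pos (Real.sqrt_pos.2 hw') d)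
    (pow_le_pow_left₀ (Real.sqrt_nonneg _) (Real.sqrt_le_sqrt h) d)

lemma G_smul (p : Fin d → ℝ) (w : Fin d → ℕ) {κ : ℝ} (hκ : 0 < κ) :
    G d (fun i => κ * p i) w = G d p w := by
  have hsum : ∑ i, (w i : ℝ) ^ 2 * (κ * p i) ^ 2 = κ ^ 2 * ∑ i, (w i : ℝ) ^ 2 * p i ^ 2 := by
    rw [mul_sum]
    exact sum_congr rfl fun i _ => by ring
  rw [G, G, prod_mul_distrib, prod_const, card_univ, Fintype.card_fin, hsum,
    Real.sqrt_mul (sq_nonneg κ), Real.sqrt_sq hκ.le, mul_pow,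
    mul_div_mul_left _ _ (by positivity)]

lemma minG_smul (p : Fin d → ℝ) {κ : ℝ} (hκ : 0 < κ) : minG d (fun i => κ * p i) = minG d p :=
  iInf_congr fun j => G_smul p (wvec d j) hκ

lemma wvec_of_lt {i j : Fin d} (h : i < j) : wvec d j i = 0 := if_pos h

lemma wvec_self (j : Fin d) : wvec d j j = j + 1 := by simp [wvec]

lemma wvec_of_gt {i j : Fin d} (h : j < i) : wvec d j i = i := by
  simp [wvec, h.not_gt, h.ne']

lemma weightedSqNorm_wvec_pos {p : Fin d → ℝ} (hp : ∀ i, 0 < p i) (j : Fin d) :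
    0 < weightedSqNorm p (wvec d j) :=
  sum_pos' (fun _ _ => by positivity)
    ⟨j, mem_univ j, by have := hp j; rw [wvec_self]; positivity⟩

lemma pstar_pos (i : Fin d) : 0 < pstar d i := by
  unfold pstar
  split_ifs with h0 h1
  · exact one_pos
  · positivity
  · exact div_pos (by positivity) (Nat.cast_pos.2 (by omega))

lemma pstar_of_val_eq_zero {i : Fin d} (h : (i : ℕ) = 0) : pstar d i = 1 := if_pos h

lemma pstar_sq_of_val_eq_one {i : Fin d} (h : (i : ℕ) = 1) : pstar d i ^ 2 = 1 / 3 := by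
  simp [pstar, h]

lemma pstar_sq_of_two_le {i : Fin d} (h : 2 ≤ (i : ℕ)) :
    pstar d i ^ 2 = 2 / 3 / ((i : ℕ) : ℝ) ^ 2 := by
  rw [pstar, if_neg (by omega), if_neg (by omega), div_pow,
    Real.sq_sqrt (by norm_num)]

lemma two_mul_add_one_mul_pstar_sq_le {i : Fin d} (h : 1 ≤ (i : ℕ)) :
    (2 * (i : ℕ) + 1) * pstar d i ^ 2 ≤ 1 := by
  rcases h.eq_or_lt with h1 | h2
  · rw [pstar_sq_of_val_eq_one h1.symm, ← h1]
    norm_num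
  · have hi : (2 : ℝ) ≤ (i : ℕ) := by exact_mod_cast h2
    rw [pstar_sq_of_two_le h2, mul_div_assoc', div_le_one (by positivity)]
    nlinarith

lemma avgWeight_pos (n : ℕ) : 0 < avgWeight n := by
  unfold avgWeight
  split_ifs with h0 h1
  · norm_num
  · norm_num
  · exact pow_pos (Nat.cast_pos.2 (by omega)) 2

lemma avgWeight_mul_pstar_sq (i : Fin d) : avgWeight i * pstar d i ^ 2 = 2 / 3 := by
  rcases Nat.lt_or_ge i 2 with hi | hi
  · rcases Nat.lt_or_ge i 1 with h0 | h1
    · rw [pstar_of_val_eq_zero (by omega), avgWeight, if_pos (by omega)]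
      norm_num
    · rw [pstar_sq_of_val_eq_one (by omega), avgWeight, if_neg (by omega), if_pos (by omega)]
      norm_num
  · have : ((i : ℕ) : ℝ) ≠ 0 := Nat.cast_ne_zero.2 (by omega)
    rw [pstar_sq_of_two_le hi, avgWeight, if_neg (by omega), if_neg (by omega)]
    field_simp

lemma avgWeight_eq {j₀ j₁ : Fin d} (h₀ : (j₀ : ℕ) = 0) (h₁ : (j₁ : ℕ) = 1) (i : Fin d) :
    avgWeight i = 2 / 3 * (wvec d j₀ i : ℝ) ^ 2 + 1 / 3 * (wvec d j₁ i : ℝ) ^ 2 := by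
  unfold avgWeight wvec
  simp only [Fin.lt_def, Fin.ext_iff, h₀, h₁]
  split_ifs <;> simp_all <;> ring

lemma sum_avgWeight_mul_sq {j₀ j₁ : Fin d} (h₀ : (j₀ : ℕ) = 0) (h₁ : (j₁ : ℕ) = 1)
    (p : Fin d → ℝ) : ∑ i : Fin d, avgWeight i * p i ^ 2
      = 2 / 3 * weightedSqNorm p (wvec d j₀) + 1 / 3 * weightedSqNorm p (wvec d j₁) := by
  simp only [weightedSqNorm, mul_sum, ← sum_add_distrib]
  exact sum_congr rfl fun i _ => by rw [avgWeight_eq h₀ h₁]; ring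

lemma prod_avgWeight (hd : 2 ≤ d) :
    ∏ i : Fin d, avgWeight i = 4 / 3 * ((d - 1).factorial : ℝ) ^ 2 := by
  induction d, hd using Nat.le_induction with
  | base => norm_num [Fin.prod_univ_two, avgWeight]
  | succ n hn ih =>
    rw [Fin.prod_univ_castSucc]
    simp only [Fin.val_castSucc, Fin.val_last]
    rw [ih, avgWeight, if_neg (by omega), if_neg (by omega), Nat.add_sub_cancel,
      ← Nat.mul_factorial_pred (by omega : n ≠ 0)]
    push_cast
    ring

lemma Gsup_sq (hd : 2 ≤ d) : Gsup d ^ 2 = 1 / (d ^ d * ∏ i : Fin d, avgWeight i) := by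
  have hd₀ : (d : ℝ) ≠ 0 := Nat.cast_ne_zero.2 (by omega)
  have hsqrt : (Real.sqrt d ^ d) ^ 2 = (d : ℝ) ^ d := by
    rw [← pow_mul, mul_comm, pow_mul, Real.sq_sqrt (Nat.cast_nonneg d)]
  rw [prod_avgWeight hd, Gsup, div_pow, mul_pow, mul_pow, div_pow, hsqrt,
    Real.sq_sqrt (by norm_num), ← Nat.mul_factorial_pred (by omega : d ≠ 0)]
  push_cast
  field_simp
  ring

-- Termwise `wvec d j i ≤ wvec d j₀ i` except at `i = j`, whose excess is paid for at `i = j₀`.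
lemma weightedSqNorm_pstar_wvec_le {j₀ j : Fin d} (h₀ : (j₀ : ℕ) = 0) (hj : 1 ≤ (j : ℕ)) :
    weightedSqNorm (pstar d) (wvec d j) ≤ weightedSqNorm (pstar d) (wvec d j₀) := by
  have hlt : j₀ < j := Fin.lt_def.2 (by omega)
  refine sum_le_sum_of_pair_le hlt.ne ?_ fun i hi₀ hij => ?_
  · rw [wvec_of_lt hlt, wvec_self, wvec_self, wvec_of_gt hlt, pstar_of_val_eq_zero h₀, h₀]
    have := two_mul_add_one_mul_pstar_sq_le hj
    push_cast
    nlinarith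
  · rcases lt_or_gt_of_ne hij with hi | hi
    · rw [wvec_of_lt hi, Nat.cast_zero, zero_pow two_ne_zero, zero_mul]
      positivity
    · rw [wvec_of_gt hi, wvec_of_gt (Fin.lt_def.2 (by have := Fin.val_ne_of_ne hi₀; omega))]

lemma weightedSqNorm_pstar_wvec_zero_le {j₀ j₁ : Fin d} (h₀ : (j₀ : ℕ) = 0)
    (h₁ : (j₁ : ℕ) = 1) :
    weightedSqNorm (pstar d) (wvec d j₀) ≤ weightedSqNorm (pstar d) (wvec d j₁) := by
  have hlt : j₀ < j₁ := Fin.lt_def.2 (by omega)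
  refine sum_le_sum_of_pair_le hlt.ne ?_ fun i hi₀ hi₁ => ?_
  · rw [wvec_of_lt hlt, wvec_self, wvec_self, wvec_of_gt hlt, pstar_of_val_eq_zero h₀,
      pstar_sq_of_val_eq_one h₁, h₀, h₁]
    norm_num
  · have hi : j₁ < i := Fin.lt_def.2 (by
      have := Fin.val_ne_of_ne hi₀; have := Fin.val_ne_of_ne hi₁; omega)
    rw [wvec_of_gt hi, wvec_of_gt (hlt.trans hi)]

lemma weightedSqNorm_pstar_wvec_zero {j₀ j₁ : Fin d} (h₀ : (j₀ : ℕ) = 0)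
    (h₁ : (j₁ : ℕ) = 1) :
    weightedSqNorm (pstar d) (wvec d j₀) = 2 * d / 3 := by
  have hS₁ := weightedSqNorm_pstar_wvec_le h₀ (j := j₁) h₁.ge
  have hS₀ := weightedSqNorm_pstar_wvec_zero_le h₀ h₁
  have hsum := sum_avgWeight_mul_sq h₀ h₁ (pstar d)
  simp only [avgWeight_mul_pstar_sq, sum_const, card_univ, Fintype.card_fin, nsmul_eq_mul] at hsum
  linarith

lemma Gsup_pos (hd : 0 < d) : 0 < Gsup d := by
  unfold Gsup
  have : (0 : ℝ) < d := Nat.cast_pos.2 hd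
  positivity

lemma prod_pstar_sq_mul_prod_avgWeight :
    (∏ i, pstar d i) ^ 2 * ∏ i : Fin d, avgWeight i = (2 / 3) ^ d := by
  rw [← prod_pow, ← prod_mul_distrib]
  simp only [mul_comm (pstar d _ ^ 2), avgWeight_mul_pstar_sq, prod_const, card_univ,
    Fintype.card_fin]

lemma G_pstar_wvec_zero_s2 (hd : 2 ≤ d) {j₀ : Fin d} (h₀ : (j₀ : ℕ) = 0) :
    G d (pstar d) (wvec d j₀) = Gsup d := by
  have hc : 0 < ∏ i : Fin d, avgWeight i := prod_pos fun i _ => avgWeight_pos i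
  have hd₀ : (0 : ℝ) < d := Nat.cast_pos.2 (by omega)
  have hG : 0 ≤ G d (pstar d) (wvec d j₀) :=
    div_nonneg (prod_pos fun i _ => pstar_pos i).le (by positivity)
  refine (pow_left_inj₀ hG (Gsup_pos (by omega)).le two_ne_zero).1 ?_
  rw [G_sq, Gsup_sq hd, weightedSqNorm_pstar_wvec_zero h₀ (j₁ := ⟨1, hd⟩) rfl]
  field_simp
  rw [mul_right_comm, prod_pstar_sq_mul_prod_avgWeight, div_pow, div_pow, mul_pow]
  ring

lemma minG_pstar (hd : 2 ≤ d) : minG d (pstar d) = Gsup d := by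
  set j₀ : Fin d := ⟨0, by omega⟩
  have : Nonempty (Fin d) := ⟨j₀⟩
  have hG : ∀ j, G d (pstar d) (wvec d j₀) ≤ G d (pstar d) (wvec d j) := by
    intro j
    refine G_le_G_of_weightedSqNorm_le (prod_pos fun i _ => pstar_pos i).le
      (weightedSqNorm_wvec_pos pstar_pos j) ?_
    rcases Nat.eq_zero_or_pos j with hj | hj
    · rw [show j = j₀ from Fin.ext hj]
    · exact weightedSqNorm_pstar_wvec_le rfl hj
  rw [← G_pstar_wvec_zero_s2 hd (j₀ := j₀) rfl]
  exact le_antisymm (ciInf_le (Set.finite_range _).bddBelow j₀) (le_ciInf hG)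

lemma weightedSqNorm_div_pow_le (hd : 2 ≤ d) {p : Fin d → ℝ} {w : Fin d → ℕ}
    (h : Gsup d ≤ G d p w) :
    (weightedSqNorm p w / d) ^ d ≤ (∏ i : Fin d, avgWeight i) * (∏ i, p i) ^ 2 := by
  have hc : 0 < ∏ i : Fin d, avgWeight i := prod_pos fun i _ => avgWeight_pos i
  have hd₀ : (0 : ℝ) < d := Nat.cast_pos.2 (by omega)
  rcases (weightedSqNorm_nonneg p w).eq_or_lt with hS | hS
  · rw [← hS, zero_div, zero_pow (by omega)]
    positivity
  have hsq := pow_le_pow_left₀ (Gsup_pos (by omega)).le h 2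
  rw [Gsup_sq hd, G_sq, div_le_div_iff₀ (by positivity) (by positivity)] at hsq
  rw [div_pow, div_le_iff₀ (by positivity)]
  linarith

lemma eq_pstar_mul_of_avgWeight_mul_sq_eq {i : Fin d} {x y : ℝ} (hx : 0 < x) (hy : 0 < y)
    (h : avgWeight i * x ^ 2 = 2 / 3 * y ^ 2) : x = pstar d i * y := by
  refine (pow_left_inj₀ hx.le (mul_pos (pstar_pos i) hy).le two_ne_zero).1 ?_
  apply mul_left_cancel₀ (avgWeight_pos i).ne'
  rw [h, mul_pow, ← mul_assoc, avgWeight_mul_pstar_sq]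

lemma sum_avgWeight_mul_sq_div_pow_le (hd : 2 ≤ d) {p : Fin d → ℝ} {j₀ j₁ : Fin d}
    (h₀ : (j₀ : ℕ) = 0) (h₁ : (j₁ : ℕ) = 1)
    (hG₀ : Gsup d ≤ G d p (wvec d j₀)) (hG₁ : Gsup d ≤ G d p (wvec d j₁)) :
    ((∑ i : Fin d, avgWeight i * p i ^ 2) / d) ^ d ≤ ∏ i : Fin d, avgWeight i * p i ^ 2 := by
  have hsum := sum_avgWeight_mul_sq h₀ h₁ p
  have hnn : 0 ≤ (∑ i : Fin d, avgWeight i * p i ^ 2) / d :=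
    div_nonneg (sum_nonneg fun i _ => mul_nonneg (avgWeight_pos i).le (sq_nonneg _))
      (Nat.cast_nonneg d)
  rw [prod_mul_distrib, prod_pow]
  rcases le_total (weightedSqNorm p (wvec d j₀)) (weightedSqNorm p (wvec d j₁)) with hle | hle
  · refine (pow_le_pow_left₀ hnn ?_ d).trans (weightedSqNorm_div_pow_le hd hG₁)
    gcongr
    linarith
  · refine (pow_le_pow_left₀ hnn ?_ d).trans (weightedSqNorm_div_pow_le hd hG₀)
    gcongr
    linarith

theorem eq_smul_pstar_of_minG_eq_Gsup (hd : 2 ≤ d) {p : Fin d → ℝ} (hp : ∀ i, 0 < p i)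
    (h : minG d p = Gsup d) : ∃ κ : ℝ, 0 < κ ∧ p = fun i => κ * pstar d i := by
  set j₀ : Fin d := ⟨0, by omega⟩
  have : Nonempty (Fin d) := ⟨j₀⟩
  have hG : ∀ j, Gsup d ≤ G d p (wvec d j) := fun j =>
    h ▸ ciInf_le (Set.finite_range _).bddBelow j
  have ha : ∀ i : Fin d, 0 ≤ avgWeight i * p i ^ 2 := fun i =>
    mul_nonneg (avgWeight_pos i).le (sq_nonneg _)
  have hamgm := Real.prod_le_sum_div_card_pow ha
  rw [Fintype.card_fin] at hamgm
  have hmean := sum_avgWeight_mul_sq_div_pow_le hd (j₁ := ⟨1, hd⟩) rfl rfl (hG j₀) (hG _)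
  have hconst := Real.eq_of_prod_eq_sum_div_card_pow ha (by simpa using le_antisymm hamgm hmean)
  refine ⟨p j₀, hp j₀, funext fun i => ?_⟩
  rw [eq_pstar_mul_of_avgWeight_mul_sq_eq (hp i) (hp j₀) (hconst i j₀), mul_comm]

end

/-- The set of positive `p` attaining the supremum value `(√3/2)·d/(d^{d/2}·d!)`
of `min_{w ∈ W_d} G(·,w)` is exactly the ray `{κ·p* : κ > 0}`. -/
theorem stmt2 (d : ℕ) (hd : 2 ≤ d) :
    {p : Fin d → ℝ | (∀ i, 0 < p i) ∧
        minG d p = Real.sqrt 3 / 2 * d / (Real.sqrt d ^ d * Nat.factorial d)} =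
      {p : Fin d → ℝ | ∃ κ : ℝ, 0 < κ ∧ p = fun i => κ * pstar d i} := by
  ext p
  constructor
  · rintro ⟨hp, h⟩
    exact eq_smul_pstar_of_minG_eq_Gsup hd hp h
  · rintro ⟨κ, hκ, rfl⟩
    exact ⟨fun i => mul_pos hκ (pstar_pos i), (minG_smul _ hκ).trans (minG_pstar hd)⟩
end

section
/- W_d ⊆ Ŵ_d, and for every w ∈ Ŵ_d there exists w' ∈ W_d with w_i ≤ w'_i for all i ∈ {1,...,d}; consequently, for every p ∈ ℝ^d with all entries positive, min_{w ∈ Ŵ_d} G(p,w) = min_{w ∈ W_d} G(p,w). -/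
/-- `Ŵ_d`: vectors with some pivot `k` where `w_k = k` (1-based), zeros before,
and `1 ≤ w_j ≤ j−1` (1-based) after. -/
def What (d : ℕ) : Set (Fin d → ℕ) :=
  {w | ∃ k : Fin d, w k = (k : ℕ) + 1 ∧ (∀ i : Fin d, i < k → w i = 0) ∧
    ∀ j : Fin d, k < j → 1 ≤ w j ∧ w j ≤ (j : ℕ)}

/-! Each `w ∈ Ŵ_d` with pivot `k` is dominated componentwise by `w^(k)`, and `G p` is antitone
in `w` because larger weights only enlarge the denominator. So every value of `G p` on `Ŵ_d` is
bounded below by one on `W_d ⊆ Ŵ_d`, and the two infima agree. -/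

theorem wvec_mem_What (d : ℕ) (j : Fin d) : wvec d j ∈ What d := by
  refine ⟨j, by simp [wvec], fun i hi => by simp [wvec, hi], fun i hi => ?_⟩
  have : (j : ℕ) < i := hi
  simp only [wvec, if_neg hi.not_gt, if_neg hi.ne']
  omega

theorem exists_le_wvec_of_mem_What {d : ℕ} {w : Fin d → ℕ} (hw : w ∈ What d) :
    ∃ j, w ≤ wvec d j := by
  obtain ⟨k, hk, hlt, hgt⟩ := hw
  refine ⟨k, fun i => ?_⟩
  rcases lt_trichotomy i k with h | rfl | h
  · simp [hlt i h]
  · simp [wvec, hk]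
  · simpa only [wvec, if_neg h.not_gt, if_neg h.ne'] using (hgt i h).2

theorem ne_zero_of_mem_What {d : ℕ} {w : Fin d → ℕ} (hw : w ∈ What d) : w ≠ 0 := by
  obtain ⟨k, hk, -, -⟩ := hw
  exact Function.ne_iff.mpr ⟨k, by simp [hk]⟩

theorem G_le_G_of_le {d : ℕ} {p : Fin d → ℝ} (hp : ∀ i, 0 < p i) {w w' : Fin d → ℕ}
    (hw : w ≠ 0) (hle : w ≤ w') : G d p w' ≤ G d p w := by
  obtain ⟨i₀, hi₀⟩ := Function.ne_iff.mp hw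
  have hsum : 0 < ∑ i, (w i : ℝ) ^ 2 * p i ^ 2 := by
    refine Finset.sum_pos' (fun i _ => by positivity) ⟨i₀, Finset.mem_univ _, ?_⟩
    have := hp i₀
    have : (w i₀ : ℝ) ≠ 0 := by exact_mod_cast hi₀
    positivity
  have hprod : 0 ≤ ∏ i, p i := (Finset.prod_pos fun i _ => hp i).le
  unfold G
  gcongr with i
  exact hle i

theorem stmt12_general (d : ℕ) :
    (∀ j : Fin d, wvec d j ∈ What d) ∧
      (∀ w ∈ What d, ∃ j : Fin d, ∀ i : Fin d, w i ≤ wvec d j i) ∧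
      ∀ p : Fin d → ℝ, (∀ i, 0 < p i) →
        (⨅ w : What d, G d p w.1) = minG d p := by
  refine ⟨wvec_mem_What d, fun w hw => exists_le_wvec_of_mem_What hw, fun p hp => ?_⟩
  rw [minG, ← sInf_range, ← sInf_range]
  apply csInf_eq_csInf_of_forall_exists_le
  · rintro _ ⟨⟨w, hw⟩, rfl⟩
    obtain ⟨j, hj⟩ := exists_le_wvec_of_mem_What hw
    exact ⟨_, ⟨j, rfl⟩, G_le_G_of_le hp (ne_zero_of_mem_What hw) hj⟩
  · rintro _ ⟨j, rfl⟩
    exact ⟨_, ⟨⟨wvec d j, wvec_mem_What d j⟩, rfl⟩, le_rfl⟩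

/-- `W_d ⊆ Ŵ_d`, every element of `Ŵ_d` is dominated componentwise by an element
of `W_d`, and consequently `min_{w ∈ Ŵ_d} G(p,w) = min_{w ∈ W_d} G(p,w)` for every
positive `p`. -/
theorem stmt12 (d : ℕ) (hd : 2 ≤ d) :
    (∀ j : Fin d, wvec d j ∈ What d) ∧
      (∀ w ∈ What d, ∃ j : Fin d, ∀ i : Fin d, w i ≤ wvec d j i) ∧
      ∀ p : Fin d → ℝ, (∀ i, 0 < p i) →
        (⨅ w : What d, G d p w.1) = minG d p :=
  stmt12_general d
end

section
/- For every z ∈ ℤ, the d-dimensional Lebesgue measure of the simplex L_z satisfies meas_d(L_z) = |p| · meas_{d−1}(K), where meas_{d−1}(K) is the (d−1)-dimensional Lebesgue measure of K in ℝ^{d−1}. -/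
/-!
A simplex `conv {v₀, …, vₙ} ⊂ ℝⁿ` is the image of the corner simplex `{x ≥ 0, ∑ xᵢ ≤ 1}`,
of volume `1/n!` (Cavalieri and induction on `n`), under `x ↦ v₀ + ∑ xⱼ (vⱼ₊₁ - v₀)`, so its volume
is `|det (vⱼ₊₁ - v₀)| / n!`. For `L_z` the edge `B_{z+d} - B_z = (0, d·p)` is vertical:
expanding the determinant along it leaves `d·p` times the determinant of the simplex spanned by
the `A_{(z+k) mod d}`, `k < d`, which is `K` with its vertices permuted. The factor `d` cancels
against `d! / (d-1)!`.
-/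

/-- The point `B_j = (A_{j mod d}, j·p) ∈ ℝ^{d−1} × ℝ ≅ ℝ^d`: the first `d−1`
coordinates are those of `A_{j mod d}` and the last coordinate is `j·p`. -/
noncomputable def Bpt (d : ℕ) (A : Fin d → Fin (d - 1) → ℝ) (p : ℝ) (j : ℤ) :
    Fin d → ℝ :=
  fun i =>
    if h : (i : ℕ) < d - 1 then
      A ⟨(j % (d : ℤ)).toNat, by
        have h1 := i.isLt
        have h2 : (0 : ℤ) < (d : ℤ) := by omega
        have h3 := Int.emod_lt_of_pos j h2
        have h4 := Int.emod_nonneg j (ne_of_gt h2)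
        omega⟩ ⟨(i : ℕ), h⟩
    else (j : ℝ) * p

/-- The simplex `L_z = conv{B_z, B_{z+1}, …, B_{z+d}} ⊂ ℝ^d`. -/
noncomputable def Lsimp (d : ℕ) (A : Fin d → Fin (d - 1) → ℝ) (p : ℝ) (z : ℤ) :
    Set (Fin d → ℝ) :=
  convexHull ℝ (Set.range fun i : Fin (d + 1) => Bpt d A p (z + (i : ℕ)))

open MeasureTheory Set
open scoped Nat Matrix

def cornerSimplex (n : ℕ) (t : ℝ) : Set (Fin n → ℝ) :=
  {x | (∀ i, 0 ≤ x i) ∧ ∑ i, x i ≤ t}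

lemma cornerSimplex_eq_empty {n : ℕ} {t : ℝ} (ht : t < 0) : cornerSimplex n t = ∅ :=
  eq_empty_of_forall_notMem fun _ ⟨hx, hsum⟩ =>
    (Finset.sum_nonneg fun i _ => hx i).not_gt (hsum.trans_lt ht)

lemma measurableSet_cornerSimplex (n : ℕ) (t : ℝ) : MeasurableSet (cornerSimplex n t) := by
  simp only [cornerSimplex, ofPred_and, ofPred_forall]
  exact (MeasurableSet.iInter fun i => measurableSet_le measurable_const (measurable_pi_apply i))
    |>.inter (measurableSet_le (by fun_prop) measurable_const)

lemma cons_mem_cornerSimplex_succ {n : ℕ} {t s : ℝ} {y : Fin n → ℝ} :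
    Fin.cons s y ∈ cornerSimplex (n + 1) t ↔ 0 ≤ s ∧ y ∈ cornerSimplex n (t - s) := by
  simp only [cornerSimplex, mem_ofPred_eq, Fin.forall_fin_succ, Fin.cons_zero, Fin.cons_succ,
    Fin.sum_cons, le_sub_iff_add_le', and_assoc]

lemma volume_cons_mem_cornerSimplex_succ {n : ℕ} {t : ℝ}
    (ih : ∀ t, 0 ≤ t → volume (cornerSimplex n t) = .ofReal (t ^ n / n !)) (s : ℝ) :
    volume {y | (Fin.cons s y : Fin (n + 1) → ℝ) ∈ cornerSimplex (n + 1) t} =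
      (Icc 0 t).indicator (fun s => .ofReal ((t - s) ^ n / n !)) s := by
  simp only [cons_mem_cornerSimplex_succ]
  by_cases hs : s ∈ Icc 0 t
  · rw [indicator_of_mem hs, ← ih _ (sub_nonneg.2 hs.2)]
    simp [hs.1]
  · rw [indicator_of_notMem hs]
    rw [mem_Icc, not_and_or, not_le, not_le] at hs
    rcases hs with hs | hs
    · simp [hs.not_ge]
    · simp [cornerSimplex_eq_empty (sub_neg.2 hs)]

lemma lintegral_sub_pow_div_factorial (n : ℕ) {t : ℝ} (ht : 0 ≤ t) :
    ∫⁻ s in Icc 0 t, .ofReal ((t - s) ^ n / n !) = .ofReal (t ^ (n + 1) / (n + 1)!) := by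
  have hnonneg : 0 ≤ᵐ[volume.restrict (Icc 0 t)] fun s => (t - s) ^ n / n ! :=
    (ae_restrict_iff' measurableSet_Icc).2 <| .of_forall fun s hs => by
      have := sub_nonneg.2 hs.2
      positivity
  have hint : IntegrableOn (fun s => (t - s) ^ n / n !) (Icc 0 t) :=
    (by fun_prop : Continuous fun s => (t - s) ^ n / n !).integrableOn_Icc
  rw [← ofReal_integral_eq_lintegral_ofReal hint hnonneg, integral_Icc_eq_integral_Ioc,
    ← intervalIntegral.integral_of_le ht, intervalIntegral.integral_div,
    intervalIntegral.integral_comp_sub_left (fun s => s ^ n), integral_pow, Nat.factorial_succ]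
  congr 1
  push_cast
  field_simp
  ring

theorem volume_cornerSimplex (n : ℕ) {t : ℝ} (ht : 0 ≤ t) :
    volume (cornerSimplex n t) = .ofReal (t ^ n / n !) := by
  induction n generalizing t with
  | zero =>
    have : cornerSimplex 0 t = univ := by simp [cornerSimplex, ht]
    simp [this, volume_pi]
  | succ n ih =>
    have hmp := (volume_preserving_piFinSuccAbove (fun _ : Fin (n + 1) => ℝ) 0).symm
    rw [← hmp.measure_preimage (measurableSet_cornerSimplex _ _).nullMeasurableSet,
      Measure.volume_eq_prod, Measure.prod_apply
        ((measurableSet_cornerSimplex _ _).preimage (MeasurableEquiv.measurable _))]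
    simp only [preimage, MeasurableEquiv.piFinSuccAbove_symm_apply, Fin.insertNthEquiv,
      Equiv.coe_fn_mk, Fin.insertNth_zero', mem_ofPred_eq,
      volume_cons_mem_cornerSimplex_succ fun _ => ih]
    rw [lintegral_indicator measurableSet_Icc, lintegral_sub_pow_div_factorial n ht]

lemma stdSimplex_fin_succ_eq_image (n : ℕ) :
    stdSimplex ℝ (Fin (n + 1)) = (fun y => Fin.cons (1 - ∑ i, y i) y) '' cornerSimplex n 1 := by
  ext x
  constructor
  · rintro ⟨hx, hsum⟩
    rw [Fin.sum_univ_succ] at hsum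
    refine ⟨Fin.tail x, ⟨fun i => hx _, ?_⟩, ?_⟩
    · simp only [Fin.tail]
      linarith [hx 0]
    · conv_rhs => rw [← Fin.cons_self_tail x]
      simp only [Fin.tail, ← hsum, add_sub_cancel_right]
  · rintro ⟨y, ⟨hy, hsum⟩, rfl⟩
    exact ⟨Fin.cases (sub_nonneg.2 hsum) hy, by simp [Fin.sum_cons]⟩

lemma convexHull_range_eq_image_stdSimplex {ι E : Type*} [Fintype ι] [AddCommGroup E]
    [Module ℝ E] (f : ι → E) :
    convexHull ℝ (range f) = (fun w => ∑ i, w i • f i) '' stdSimplex ℝ ι := by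
  classical
  have hf : f = Fintype.linearCombination ℝ f ∘ fun i => Pi.single i 1 := by
    ext i
    simp [Fintype.linearCombination_apply_single]
  have hL : (fun w => ∑ i, w i • f i) = Fintype.linearCombination ℝ f :=
    funext fun w => (Fintype.linearCombination_apply ℝ f w).symm
  rw [← convexHull_rangle_single_eq_stdSimplex, hL, LinearMap.image_convexHull, ← range_comp,
    ← hf]

lemma convexHull_range_fin_succ {n : ℕ} {E : Type*} [AddCommGroup E] [Module ℝ E]
    (f : Fin (n + 1) → E) :
    convexHull ℝ (range f) =
      (fun y => f 0 + ∑ j, y j • (f j.succ - f 0)) '' cornerSimplex n 1 := by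
  rw [convexHull_range_eq_image_stdSimplex, stdSimplex_fin_succ_eq_image, image_image]
  refine image_congr fun y _ => ?_
  simp only [Fin.sum_univ_succ, Fin.cons_zero, Fin.cons_succ, smul_sub, Finset.sum_sub_distrib,
    sub_smul, one_smul, ← Finset.sum_smul]
  abel

lemma MeasureTheory.Measure.addHaar_image_const_add_linearMap {E : Type*}
    [NormedAddCommGroup E] [NormedSpace ℝ E] [MeasurableSpace E] [BorelSpace E]
    [FiniteDimensional ℝ E]
    (μ : Measure E) [μ.IsAddHaarMeasure] (c : E) (L : E →ₗ[ℝ] E) (s : Set E) :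
    μ ((fun y => c + L y) '' s) = .ofReal |LinearMap.det L| * μ s := by
  rw [← image_image (c + ·) L, image_add_left, measure_preimage_add,
    Measure.addHaar_image_linearMap]

theorem volume_convexHull_range_fin {n : ℕ} (f : Fin (n + 1) → Fin n → ℝ) :
    volume (convexHull ℝ (range f)) =
      .ofReal (|(Matrix.of fun k => f k.succ - f 0).det| / n !) := by
  set V : Matrix (Fin n) (Fin n) ℝ := Matrix.of fun k => f k.succ - f 0
  have hV : (fun y : Fin n → ℝ => f 0 + ∑ j, y j • (f j.succ - f 0)) =
      fun y => f 0 + Matrix.toLin' Vᵀ y := by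
    funext y
    rw [Matrix.toLin'_apply, Matrix.mulVec_transpose, Matrix.vecMul_eq_sum]
    rfl
  rw [convexHull_range_fin_succ, hV, Measure.addHaar_image_const_add_linearMap,
    LinearMap.det_toLin', Matrix.det_transpose, volume_cornerSimplex n zero_le_one, one_pow,
    ← ENNReal.ofReal_mul (abs_nonneg _), mul_one_div]

theorem Matrix.det_eq_mul_det_submatrix_castSucc {R : Type*} [CommRing R] {m : ℕ}
    (M : Matrix (Fin (m + 1)) (Fin (m + 1)) R)
    (h : ∀ j : Fin m, M (Fin.last m) j.castSucc = 0) :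
    M.det = M (Fin.last m) (Fin.last m) * (M.submatrix Fin.castSucc Fin.castSucc).det := by
  rw [Matrix.det_succ_row M (Fin.last m), Fintype.sum_eq_single (Fin.last m)]
  · simp [Fin.succAbove_last, ← two_mul, pow_mul]
  · intro j hj
    obtain ⟨j, rfl⟩ := Fin.exists_castSucc_eq.2 hj
    simp [h]

theorem volume_convexHull_range_of_vertical_edge {m : ℕ} (f : Fin (m + 2) → Fin (m + 1) → ℝ)
    (h : ℝ) (hf : f (Fin.last (m + 1)) - f 0 = Pi.single (Fin.last m) h) :
    volume (convexHull ℝ (range f)) = .ofReal (|h| / (m + 1)) *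
      volume (convexHull ℝ (range fun k : Fin (m + 1) => Fin.init (f k.castSucc))) := by
  rw [volume_convexHull_range_fin, volume_convexHull_range_fin,
    ← ENNReal.ofReal_mul (by positivity), Matrix.det_eq_mul_det_submatrix_castSucc]
  · have hsub : (Matrix.of fun k => f k.succ - f 0).submatrix Fin.castSucc Fin.castSucc =
        Matrix.of fun k : Fin m =>
          Fin.init (f k.succ.castSucc) - Fin.init (f (0 : Fin (m + 1)).castSucc) := by
      ext k i
      simp [Fin.init]
    simp only [hsub, Matrix.of_apply, Fin.succ_last, hf, Pi.single_eq_same, abs_mul,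
      Nat.factorial_succ]
    push_cast
    field_simp
  · intro j
    simp only [Matrix.of_apply, Fin.succ_last, Nat.succ_eq_add_one, hf]
    exact Pi.single_eq_of_ne (Fin.castSucc_lt_last j).ne _

section Bpt

variable {m : ℕ} (A : Fin (m + 1) → Fin m → ℝ) (p : ℝ)

-- `ZMod (m + 1)` is `Fin (m + 1)` by definition, so residues index the points `A`.
lemma init_Bpt (j : ℤ) : Fin.init (Bpt (m + 1) A p j) = A (j : ZMod (m + 1)) := by
  funext i
  have hi : (i.castSucc : ℕ) < m + 1 - 1 := by simp
  simp only [Fin.init, Bpt, dif_pos hi]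
  congr 1
  ext
  change (j % ((m + 1 : ℕ) : ℤ)).toNat = ZMod.val (j : ZMod (m + 1))
  rw [← Int.toNat_natCast (ZMod.val _), ZMod.val_intCast]

lemma Bpt_last (j : ℤ) : Bpt (m + 1) A p j (Fin.last m) = j * p := by
  simp [Bpt]

lemma Bpt_add_sub_Bpt (j : ℤ) :
    Bpt (m + 1) A p (j + (m + 1 : ℕ)) - Bpt (m + 1) A p j =
      Pi.single (Fin.last m) ((m + 1) * p) := by
  funext i
  induction i using Fin.lastCases with
  | last => simp [Bpt_last]; ring
  | cast i =>
    rw [Pi.sub_apply, Pi.single_eq_of_ne (Fin.castSucc_lt_last i).ne, sub_eq_zero]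
    have h := congr_fun (init_Bpt A p (j + (m + 1 : ℕ))) i
    rw [Int.cast_add, Int.cast_natCast, ZMod.natCast_self, add_zero, ← init_Bpt A p j] at h
    exact h

end Bpt

lemma range_comp_intCast_add {α : Type*} {n : ℕ} (g : ZMod (n + 1) → α) (z : ℤ) :
    range (fun k : Fin (n + 1) => g ((z + (k : ℕ) : ℤ) : ZMod (n + 1))) = range g := by
  refine Function.Surjective.range_comp (fun y => ⟨(y - z : ZMod (n + 1)), ?_⟩) g
  change ((z + (ZMod.val (y - z : ZMod (n + 1)) : ℕ) : ℤ) : ZMod (n + 1)) = y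
  push_cast
  rw [ZMod.natCast_zmod_val, add_sub_cancel]

theorem volume_Lsimp {m : ℕ} (A : Fin (m + 1) → Fin m → ℝ) (p : ℝ) (z : ℤ) :
    volume (Lsimp (m + 1) A p z) = .ofReal |p| * volume (convexHull ℝ (range A)) := by
  rw [Lsimp, volume_convexHull_range_of_vertical_edge _ ((m + 1) * p)]
  · simp only [Fin.val_castSucc, init_Bpt]
    rw [abs_mul, abs_of_pos (by positivity : (0 : ℝ) < m + 1),
      mul_div_cancel_left₀ _ (by positivity), range_comp_intCast_add A z]
    rfl
  · simpa using Bpt_add_sub_Bpt A p z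

/-- `meas_d(L_z) = |p| · meas_{d−1}(K)` where `K = conv{A_0,…,A_{d−1}}`. -/
theorem stmt13 (d : ℕ) (hd : 2 ≤ d) (A : Fin d → Fin (d - 1) → ℝ) (p : ℝ) (z : ℤ) :
    MeasureTheory.volume (Lsimp d A p z) =
      ENNReal.ofReal |p| * MeasureTheory.volume (convexHull ℝ (Set.range A)) := by
  obtain ⟨m, rfl⟩ : ∃ m, d = m + 1 := ⟨d - 1, by omega⟩
  exact volume_Lsimp A p z
end

section
/- Assume the points A_0, ..., A_{d−1} are affinely independent and p > 0. Then the union over all z ∈ ℤ of the simplices L_z equals the infinite prism K × ℝ ⊂ ℝ^d. -/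
/-!
Write the horizontal part of `x` as a convex combination `∑ⱼ lⱼ • Aⱼ`, and extend the weights
`d`-periodically to `ℤ`. The "stair" point `P_z = ∑_{k<d} l_{z+k} • B_{z+k}` has horizontal part
`∑ⱼ lⱼ • Aⱼ` for every `z`, and both `P_z` and `P_{z+1}` are convex combinations of vertices
of `L_z`. Since `B_{j+d} = B_j + (0, d p)`, the height of `P_z` grows by `d p` when `z` grows
by `d`, so it is unbounded in both directions. For the `z` at which it first passes the height
of `x`, the point `x` lies on the vertical segment `[P_z, P_{z+1}] ⊆ L_z`.
-/

open Finset Set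
open scoped Fin.IntCast AddConstMap

theorem Pi.mem_segment_of_forall_ne {𝕜 ι E : Type*} [Semiring 𝕜] [PartialOrder 𝕜]
    [AddCommMonoid E] [Module 𝕜 E] {u v x : ι → E} (i₀ : ι)
    (h : ∀ i ≠ i₀, u i = x i ∧ v i = x i) (h₀ : x i₀ ∈ segment 𝕜 (u i₀) (v i₀)) :
    x ∈ segment 𝕜 u v := by
  obtain ⟨a, b, ha, hb, hab, hx⟩ := h₀
  refine ⟨a, b, ha, hb, hab, funext fun i => ?_⟩
  by_cases hi : i = i₀
  · subst hi
    exact hx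
  · obtain ⟨hu, hv⟩ := h i hi
    simp only [Pi.add_apply, Pi.smul_apply, hu, hv, Convex.combo_self hab]

theorem mem_convexHull_range_iff_exists_mem_stdSimplex {R E ι : Type*} [Field R] [LinearOrder R]
    [IsStrictOrderedRing R] [AddCommGroup E] [Module R E] [Fintype ι] {v : ι → E} {x : E} :
    x ∈ convexHull R (range v) ↔ ∃ w ∈ stdSimplex R ι, ∑ i, w i • v i = x := by
  classical
  have : range v = Fintype.linearCombination R v '' range fun i => Pi.single i 1 := by
    rw [← Set.range_comp]
    congr 1
    funext i
    simp
  rw [this, ← LinearMap.image_convexHull, convexHull_rangle_single_eq_stdSimplex]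
  simp [Fintype.linearCombination_apply]

theorem Int.exists_apply_le_lt_apply_add_one {α : Type*} [LinearOrder α] (f : ℤ → α) {a b : ℤ}
    {t : α} (hab : a ≤ b) (ha : f a ≤ t) (hb : t < f b) : ∃ z, f z ≤ t ∧ t < f (z + 1) := by
  induction b, hab using Int.leInduction with
  | base => exact absurd hb (not_lt.2 ha)
  | succ b _ ih =>
    rcases lt_or_ge t (f b) with h | h
    · exact ih h
    · exact ⟨b, h, hb⟩

section IntCast

variable {d : ℕ} [NeZero d]

theorem Fin.intCast_add_natCast_self (j : ℤ) : ((j + d : ℤ) : Fin d) = j := by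
  ext
  simp

theorem Fin.sum_range_intCast_add {M : Type*} [AddCommMonoid M] (g : Fin d → M) (z : ℤ) :
    ∑ k ∈ range d, g ((z + k : ℤ) : Fin d) = ∑ j, g j := by
  open Fin.CommRing in
  simp only [Int.cast_add, Int.cast_natCast]
  rw [← Fin.sum_univ_eq_sum_range (fun k => g ((z : Fin d) + (k : Fin d)))]
  simp only [Fin.cast_val_eq_self]
  exact Equiv.sum_comp (Equiv.addLeft (z : Fin d)) g

end IntCast

section Prism

variable {d : ℕ} [NeZero d] (A : Fin d → Fin (d - 1) → ℝ) (p : ℝ)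

variable (d) in
def horizontalPart : (Fin d → ℝ) →ₗ[ℝ] Fin (d - 1) → ℝ :=
  LinearMap.funLeft ℝ ℝ (Fin.castLE (Nat.sub_le d 1))

theorem horizontalPart_Bpt (j : ℤ) : horizontalPart d (Bpt d A p j) = A j := by
  have hj (h) : (⟨(j % d).toNat, h⟩ : Fin d) = j := Fin.ext (Fin.val_intCast j).symm
  funext i
  simp only [horizontalPart, LinearMap.funLeft_apply, Bpt, Fin.val_castLE, dif_pos i.2, hj]

theorem Bpt_apply_top (j : ℤ) : Bpt d A p j ⊤ = j * p := by
  simp [Bpt, Fin.val_top]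

theorem apply_eq_horizontalPart_of_ne_top (x : Fin d → ℝ) {i : Fin d} (hi : i ≠ ⊤) :
    x i = horizontalPart d x ⟨i, lt_of_le_of_ne (Nat.le_sub_one_of_lt i.2)
      (by rwa [Ne, Fin.ext_iff, Fin.val_top] at hi)⟩ := rfl

theorem horizontalPart_mem_of_mem_Lsimp {x : Fin d → ℝ} {z : ℤ} (hx : x ∈ Lsimp d A p z) :
    horizontalPart d x ∈ convexHull ℝ (range A) := by
  refine convexHull_min ?_ ((convex_convexHull ℝ _).linear_preimage _) hx
  rintro _ ⟨i, rfl⟩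
  rw [Set.mem_preimage, horizontalPart_Bpt]
  exact subset_convexHull ℝ _ ⟨_, rfl⟩

noncomputable def stair (l : Fin d → ℝ) (z : ℤ) : Fin d → ℝ :=
  ∑ k ∈ range d, l ((z + k : ℤ) : Fin d) • Bpt d A p (z + k)

variable {A p} {l : Fin d → ℝ}

theorem stair_add_mem_Lsimp (hl : l ∈ stdSimplex ℝ (Fin d)) (z : ℤ) {m : ℕ} (hm : m ≤ 1) :
    stair A p l (z + m) ∈ Lsimp d A p z := by
  refine (convex_convexHull ℝ _).sum_mem (fun k _ => hl.1 _) ?_ fun k hk => ?_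
  · rw [Fin.sum_range_intCast_add l, hl.2]
  · refine subset_convexHull ℝ _ ⟨⟨m + k, by have := mem_range.1 hk; omega⟩, ?_⟩
    simp [add_assoc]

theorem horizontalPart_stair (z : ℤ) :
    horizontalPart d (stair A p l z) = ∑ j, l j • A j := by
  simp only [stair, map_sum, map_smul, horizontalPart_Bpt]
  exact Fin.sum_range_intCast_add (fun j => l j • A j) z

theorem stair_apply_top_add_self (hl : ∑ j, l j = 1) (z : ℤ) :
    stair A p l (z + d) ⊤ = stair A p l z ⊤ + d * p := by
  have hper (k : ℕ) : ((z + d + k : ℤ) : Fin d) = ((z + k : ℤ) : Fin d) := by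
    rw [add_right_comm, Fin.intCast_add_natCast_self]
  simp only [stair, Finset.sum_apply, Pi.smul_apply, smul_eq_mul, Bpt_apply_top]
  rw [← one_mul ((d : ℝ) * p), ← hl, ← Fin.sum_range_intCast_add l z, Finset.sum_mul,
    ← Finset.sum_add_distrib]
  refine Finset.sum_congr rfl fun k _ => ?_
  rw [hper]
  push_cast
  ring

theorem exists_stair_apply_top_le_lt (hl : ∑ j, l j = 1) (hp : 0 < p) (t : ℝ) :
    ∃ z, stair A p l z ⊤ ≤ t ∧ t < stair A p l (z + 1) ⊤ := by
  let h : ℤ →+c[(d : ℤ), d * p] ℝ := ⟨fun z => stair A p l z ⊤, stair_apply_top_add_self hl⟩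
  have hdp : 0 < (d : ℝ) * p := mul_pos (Nat.cast_pos.2 (NeZero.pos d)) hp
  set n := ⌊(t - h 0) / (d * p)⌋
  refine Int.exists_apply_le_lt_apply_add_one h (a := n • d) (b := (n + 1) • d)
    (zsmul_le_zsmul_left (Int.natCast_nonneg d) (Int.le_add_one le_rfl)) ?_ ?_
  · rw [AddConstMapClass.map_zsmul_const, zsmul_eq_mul, ← le_sub_iff_add_le', ← le_div_iff₀ hdp]
    exact Int.floor_le _
  · rw [AddConstMapClass.map_zsmul_const, zsmul_eq_mul, ← sub_lt_iff_lt_add', ← div_lt_iff₀ hdp]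
    push_cast
    exact Int.lt_floor_add_one _

theorem iUnion_Lsimp (hp : 0 < p) :
    ⋃ z, Lsimp d A p z = horizontalPart d ⁻¹' convexHull ℝ (range A) := by
  refine subset_antisymm (iUnion_subset fun z x => horizontalPart_mem_of_mem_Lsimp A p)
    fun x hx => ?_
  obtain ⟨l, hl, hlx⟩ := mem_convexHull_range_iff_exists_mem_stdSimplex.1 hx
  obtain ⟨z, hz, hz1⟩ := exists_stair_apply_top_le_lt hl.2 hp (x ⊤)
  have hseg : x ∈ segment ℝ (stair A p l z) (stair A p l (z + 1)) := by
    refine Pi.mem_segment_of_forall_ne ⊤ (fun i hi => ?_) ?_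
    · simp only [apply_eq_horizontalPart_of_ne_top _ hi, horizontalPart_stair, hlx, and_self]
    · rw [segment_eq_Icc (hz.trans hz1.le)]
      exact ⟨hz, hz1.le⟩
  have h₀ : stair A p l z ∈ Lsimp d A p z := by
    simpa using stair_add_mem_Lsimp hl z (m := 0) zero_le_one
  have h₁ : stair A p l (z + 1) ∈ Lsimp d A p z := by
    exact_mod_cast stair_add_mem_Lsimp hl z le_rfl
  exact mem_iUnion.2 ⟨z, (convex_convexHull ℝ _).segment_subset h₀ h₁ hseg⟩

end Prism

/-- If `A_0, …, A_{d−1}` are affinely independent and `p > 0`, the union of the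
simplices `L_z` over `z ∈ ℤ` is the infinite prism `K × ℝ ⊂ ℝ^d`, i.e. the set of
points of `ℝ^d` whose first `d−1` coordinates form a point of
`K = conv{A_0,…,A_{d−1}}` (the last coordinate being arbitrary). -/
theorem stmt15 (d : ℕ) (hd : 2 ≤ d) (A : Fin d → Fin (d - 1) → ℝ) (p : ℝ)
    (hp : 0 < p) :
    (⋃ z : ℤ, Lsimp d A p z) =
      {x : Fin d → ℝ |
        (fun i : Fin (d - 1) => x ⟨(i : ℕ), by have := i.isLt; omega⟩) ∈
          convexHull ℝ (Set.range A)} := by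
  have : NeZero d := ⟨by omega⟩
  exact iUnion_Lsimp hp
end

section
/- Assume the points A_0, ..., A_{d−1} are affinely independent and p > 0. Then for any z, z' ∈ ℤ with z ≠ z', the interiors (in ℝ^d) of the simplices L_z and L_{z'} are disjoint; moreover, for every z ∈ ℤ the two consecutive simplices meet in a common facet: L_z ∩ L_{z+1} = conv{B_{z+1}, ..., B_{z+d}}. -/
/-!
For `s : ℤ` let `F_s (x) = x_d / p - G_s (x_1, …, x_{d-1})`, where `G_s` is the affine function
on `ℝ^{d-1}` with `G_s (A_k) = (k - s) % d`. Then `F_s (B_j) = j - (j - s) % d` is the largest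
integer `≤ j` congruent to `s` modulo `d`, so `F_s ≤ s` on the vertices of `L_z` for `z < s` and
`F_s ≥ s` on those of `L_s`: the hyperplane `F_s = s` separates the two simplices, and since
`F_s` is a nonconstant affine function, hence open, their interiors lie in opposite open
half-spaces. For `s = z + 1` the vertices of `L_z` on that hyperplane are `B_{z+1}, …, B_{z+d}`,
and a point of `L_z` at which `F_s` attains its maximum `z + 1` over `L_z` is a convex
combination of those vertices only.
-/

open Set

namespace Int

theorem sub_emod_le_of_sub_lt {n j s : ℤ} (hn : 0 < n) (h : j - s < n) : j - (j - s) % n ≤ s := by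
  rcases le_or_gt 0 (j - s) with h0 | h0
  · rw [emod_eq_of_lt h0 h]
    omega
  · have := emod_nonneg (j - s) hn.ne'
    omega

theorem le_sub_emod_of_le {n j s : ℤ} (hn : 0 < n) (h : s ≤ j) : s ≤ j - (j - s) % n := by
  rcases lt_or_ge (j - s) n with h1 | h1
  · rw [emod_eq_of_lt (by omega) h1]
    omega
  · have := emod_lt_of_pos (j - s) hn
    omega

theorem sub_emod_le_self {n : ℤ} (hn : n ≠ 0) (j s : ℤ) : j - (j - s) % n ≤ j := by
  have := emod_nonneg (j - s) hn
  omega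

end Int

theorem AffineBasis.exists_affineMap_apply_eq {ι k V P : Type*} [Fintype ι] [Ring k]
    [AddCommGroup V] [Module k V] [AddTorsor V P] (b : AffineBasis ι k P) (f : ι → k) :
    ∃ g : P →ᵃ[k] k, ∀ i, g (b i) = f i := by
  classical
  refine ⟨(Fintype.linearCombination k f).toAffineMap.comp b.coords, fun j => ?_⟩
  have : b.coords (b j) = Pi.single j 1 := by
    ext i
    rw [AffineBasis.coords_apply, b.coord_apply, Pi.single_apply]
  simp [this]

theorem AffineMap.isOpenMap_of_apply_ne {E : Type*} [NormedAddCommGroup E] [NormedSpace ℝ E]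
    [FiniteDimensional ℝ E] (f : E →ᵃ[ℝ] ℝ) {x y : E} (h : f x ≠ f y) : IsOpenMap f := by
  rw [← AffineMap.isOpenMap_linear_iff]
  have hlin : f.linear ≠ 0 := by
    rw [Ne, AffineMap.linear_eq_zero_iff_exists_const]
    rintro ⟨q, rfl⟩
    exact h rfl
  exact (LinearMap.toContinuousLinearMap f.linear).isOpenMap_of_ne_zero
    (by simpa using hlin)

theorem mem_convexHull_inter_preimage_singleton {E : Type*} [AddCommGroup E] [Module ℝ E]
    (f : E →ᵃ[ℝ] ℝ) {s : Set E} {c : ℝ}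
    (hs : ∀ y ∈ s, f y ≤ c) {x : E} (hx : x ∈ convexHull ℝ s) (hc : c ≤ f x) :
    x ∈ convexHull ℝ (s ∩ f ⁻¹' {c}) := by
  classical
  rw [convexHull_eq] at hx
  obtain ⟨ι, t, w, z, hw₀, hw₁, hz, rfl⟩ := hx
  have hfx : f (t.centerMass w z) = ∑ i ∈ t, w i * f (z i) := by
    rw [← affineCombination_eq_centerMass hw₁, Finset.map_affineCombination _ _ _ hw₁,
      Finset.affineCombination_eq_linear_combination _ _ _ hw₁]
    rfl
  have hgap : ∑ i ∈ t, w i * (c - f (z i)) = 0 := by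
    have : ∑ i ∈ t, w i * (c - f (z i)) = c - f (t.centerMass w z) := by
      simp only [mul_sub, Finset.sum_sub_distrib, ← Finset.sum_mul, hw₁, hfx, one_mul]
    refine le_antisymm (by linarith) (Finset.sum_nonneg fun i hi => ?_)
    exact mul_nonneg (hw₀ i hi) (sub_nonneg.2 (hs _ (hz i hi)))
  rw [← Finset.centerMass_filter_ne_zero]
  refine Finset.centerMass_mem_convexHull _ (fun i hi => hw₀ i (Finset.mem_filter.1 hi).1)
    (by rw [Finset.sum_filter_ne_zero, hw₁]; exact one_pos) fun i hi => ?_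
  obtain ⟨hi, hwi⟩ := Finset.mem_filter.1 hi
  have := (Finset.sum_eq_zero_iff_of_nonneg fun j hj =>
    mul_nonneg (hw₀ j hj) (sub_nonneg.2 (hs _ (hz j hj)))).1 hgap i hi
  exact ⟨hz i hi, (sub_eq_zero.1 ((mul_eq_zero.1 this).resolve_left hwi)).symm⟩

theorem interior_inter_interior_eq_empty_of_isOpenMap {X : Type*} [TopologicalSpace X]
    {f : X → ℝ} (hf : IsOpenMap f) {S T : Set X} {c : ℝ} (hS : S ⊆ f ⁻¹' Iic c)
    (hT : T ⊆ f ⁻¹' Ici c) : interior S ∩ interior T = ∅ := by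
  have hS' : f '' interior S ⊆ Iio c := by
    rw [← interior_Iic]
    exact interior_maximal ((image_mono interior_subset).trans (image_subset_iff.2 hS))
      (hf _ isOpen_interior)
  have hT' : f '' interior T ⊆ Ioi c := by
    rw [← interior_Ici]
    exact interior_maximal ((image_mono interior_subset).trans (image_subset_iff.2 hT))
      (hf _ isOpen_interior)
  refine eq_empty_iff_forall_notMem.2 fun x ⟨hxS, hxT⟩ => ?_
  exact lt_asymm (hS' (mem_image_of_mem f hxS)) (mem_Ioi.1 (hT' (mem_image_of_mem f hxT)))

section LiftedPoints

variable {d : ℕ} {A : Fin d → Fin (d - 1) → ℝ} {p : ℝ}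

def lastIndex (hd : 0 < d) : Fin d := ⟨d - 1, Nat.sub_lt hd one_pos⟩

theorem bpt_lastIndex (hd : 0 < d) (j : ℤ) : Bpt d A p j (lastIndex hd) = j * p :=
  dif_neg (lt_irrefl _)

def residue (hd : 0 < d) (j : ℤ) : Fin d :=
  ⟨(j % d).toNat, by have := Int.emod_lt_of_pos j (Int.natCast_pos.2 hd); omega⟩

theorem residue_coe (hd : 0 < d) (j : ℤ) : ((residue hd j : ℕ) : ℤ) = j % d :=
  Int.toNat_of_nonneg (Int.emod_nonneg j (by omega))

noncomputable def headCoords (d : ℕ) : (Fin d → ℝ) →ₗ[ℝ] Fin (d - 1) → ℝ :=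
  LinearMap.funLeft ℝ ℝ (Fin.castLE (Nat.sub_le d 1))

theorem headCoords_bpt (hd : 0 < d) (j : ℤ) : headCoords d (Bpt d A p j) = A (residue hd j) := by
  funext i
  exact dif_pos i.isLt

theorem exists_affineMap_bpt_eq (hd : 0 < d) (hA : AffineIndependent ℝ A) (hp : p ≠ 0) (s : ℤ) :
    ∃ F : (Fin d → ℝ) →ᵃ[ℝ] ℝ, ∀ j : ℤ, F (Bpt d A p j) = ((j - (j - s) % d : ℤ) : ℝ) := by
  let b : AffineBasis (Fin d) ℝ (Fin (d - 1) → ℝ) :=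
    ⟨A, hA, by rw [hA.affineSpan_eq_top_iff_card_eq_finrank_add_one, Fintype.card_fin,
      Module.finrank_fin_fun]; omega⟩
  obtain ⟨G, hG⟩ := b.exists_affineMap_apply_eq fun k => (((k : ℤ) - s) % d : ℤ)
  refine ⟨(p⁻¹ • LinearMap.proj (lastIndex hd)).toAffineMap - G.comp (headCoords d).toAffineMap,
    fun j => ?_⟩
  have hGA : G (A (residue hd j)) = (((j - s) % d : ℤ) : ℝ) := by
    rw [show A (residue hd j) = b (residue hd j) from rfl, hG, residue_coe, Int.emod_sub_emod]
  simp only [AffineMap.coe_sub, Pi.sub_apply, AffineMap.coe_comp, Function.comp_apply,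
    LinearMap.coe_toAffineMap, LinearMap.smul_apply, LinearMap.proj_apply, smul_eq_mul,
    bpt_lastIndex, headCoords_bpt hd, hGA, Int.cast_sub]
  field_simp

variable {s : ℤ} {F : (Fin d → ℝ) →ᵃ[ℝ] ℝ}

theorem lsimp_subset_preimage_Iic (hd : 0 < d)
    (hF : ∀ j : ℤ, F (Bpt d A p j) = ((j - (j - s) % d : ℤ) : ℝ)) {z : ℤ} (hz : z < s) :
    Lsimp d A p z ⊆ F ⁻¹' Iic (s : ℝ) := by
  refine convexHull_min (range_subset_iff.2 fun i => ?_) ((convex_Iic _).affine_preimage F)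
  rw [mem_preimage, hF, mem_Iic, Int.cast_le]
  exact Int.sub_emod_le_of_sub_lt (by omega) (by omega)

theorem lsimp_subset_preimage_Ici (hd : 0 < d)
    (hF : ∀ j : ℤ, F (Bpt d A p j) = ((j - (j - s) % d : ℤ) : ℝ)) :
    Lsimp d A p s ⊆ F ⁻¹' Ici (s : ℝ) := by
  refine convexHull_min (range_subset_iff.2 fun i => ?_) ((convex_Ici _).affine_preimage F)
  rw [mem_preimage, hF, mem_Ici, Int.cast_le]
  exact Int.le_sub_emod_of_le (by omega) (by omega)

theorem isOpenMap_of_bpt_eq (hd : 0 < d)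
    (hF : ∀ j : ℤ, F (Bpt d A p j) = ((j - (j - s) % d : ℤ) : ℝ)) : IsOpenMap F := by
  refine F.isOpenMap_of_apply_ne (x := Bpt d A p s) (y := Bpt d A p (s + d)) ?_
  rw [hF, hF, Ne, Int.cast_inj, sub_self, Int.zero_emod, add_sub_cancel_left, Int.emod_self]
  omega

theorem interior_lsimp_inter_interior_lsimp (hd : 0 < d) (hA : AffineIndependent ℝ A)
    (hp : p ≠ 0) {z z' : ℤ} (h : z < z') :
    interior (Lsimp d A p z) ∩ interior (Lsimp d A p z') = ∅ := by
  obtain ⟨F, hF⟩ := exists_affineMap_bpt_eq hd hA hp z'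
  exact interior_inter_interior_eq_empty_of_isOpenMap (isOpenMap_of_bpt_eq hd hF)
    (lsimp_subset_preimage_Iic hd hF h) (lsimp_subset_preimage_Ici hd hF)

theorem lsimp_inter_lsimp_add_one (hd : 0 < d) (hA : AffineIndependent ℝ A) (hp : p ≠ 0)
    (z : ℤ) : Lsimp d A p z ∩ Lsimp d A p (z + 1) =
      convexHull ℝ (range fun i : Fin d => Bpt d A p (z + 1 + (i : ℕ))) := by
  obtain ⟨F, hF⟩ := exists_affineMap_bpt_eq hd hA hp (z + 1)
  refine Subset.antisymm (fun x ⟨hx, hx'⟩ => ?_) (subset_inter ?_ ?_)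
  · have hface := mem_convexHull_inter_preimage_singleton F
      (fun y hy => lsimp_subset_preimage_Iic hd hF (lt_add_one z) (subset_convexHull ℝ _ hy)) hx
      (lsimp_subset_preimage_Ici hd hF hx')
    refine convexHull_mono ?_ hface
    rintro _ ⟨⟨i, rfl⟩, hi⟩
    obtain ⟨k, rfl⟩ : ∃ k : Fin d, k.succ = i := by
      refine Fin.exists_succ_eq.2 fun h0 => ?_
      have := Int.sub_emod_le_self (Int.natCast_ne_zero.2 hd.ne') z (z + 1)
      rw [h0, mem_preimage, mem_singleton_iff, hF, Fin.val_zero, Nat.cast_zero, add_zero,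
        Int.cast_inj] at hi
      omega
    exact ⟨k, by simp only [Fin.val_succ, Nat.cast_succ]; ring_nf⟩
  · refine convexHull_mono (range_subset_iff.2 fun k => ⟨k.succ, ?_⟩)
    simp only [Fin.val_succ, Nat.cast_succ]
    ring_nf
  · exact convexHull_mono (range_subset_iff.2 fun k => ⟨k.castSucc, rfl⟩)

end LiftedPoints

/-- If `A_0, …, A_{d−1}` are affinely independent and `p > 0`, then distinct
simplices `L_z, L_{z'}` have disjoint interiors, and consecutive simplices meet in
the common facet `conv{B_{z+1}, …, B_{z+d}}`. -/
theorem stmt16 (d : ℕ) (hd : 2 ≤ d) (A : Fin d → Fin (d - 1) → ℝ) (p : ℝ)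
    (hA : AffineIndependent ℝ A) (hp : 0 < p) :
    (∀ z z' : ℤ, z ≠ z' →
        interior (Lsimp d A p z) ∩ interior (Lsimp d A p z') = ∅) ∧
      ∀ z : ℤ, Lsimp d A p z ∩ Lsimp d A p (z + 1) =
        convexHull ℝ (Set.range fun i : Fin d => Bpt d A p (z + 1 + (i : ℕ))) := by
  have hd₀ : 0 < d := by omega
  refine ⟨fun z z' hne => ?_, lsimp_inter_lsimp_add_one hd₀ hA hp.ne'⟩
  rcases hne.lt_or_gt with h | h
  · exact interior_lsimp_inter_interior_lsimp hd₀ hA hp.ne' h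
  · rw [inter_comm]
    exact interior_lsimp_inter_interior_lsimp hd₀ hA hp.ne' h
end
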